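/- arXiv:1509.07641 — 9 statements merged into one kernel-verified Lean document; each statement's English description precedes it below -/
import Mathlib

section
/- For any integers m, n with 2 ≤ m ≤ n, the complete bipartite graph K_{m,n} admits no closed distance magic labeling. -/
open Finset SimpleGraph

/-- A closed distance magic labeling of a graph `G` on `n` vertices: a bijection
from the vertices to `{1, …, n}` (encoded via `V ≃ Fin n`, with label `ℓ y + 1`)
such that the sum of labels over every closed neighborhood is the constant `k`. -/
def IsClosedDistanceMagicWith {V : Type*} [Fintype V] [DecidableEq V]
    (G : SimpleGraph V) [DecidableRel G.Adj] (k : ℕ) : Prop :=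
  0 < k ∧ ∃ ℓ : V ≃ Fin (Fintype.card V),
    ∀ x : V, ∑ y ∈ insert x (G.neighborFinset x), ((ℓ y : ℕ) + 1) = k

/-- A graph admitting a closed distance magic labeling. -/
def IsClosedDistanceMagic {V : Type*} [Fintype V] [DecidableEq V]
    (G : SimpleGraph V) [DecidableRel G.Adj] : Prop :=
  ∃ k : ℕ, IsClosedDistanceMagicWith G k


instance (m n : ℕ) : DecidableRel (completeBipartiteGraph (Fin m) (Fin n)).Adj := fun x y => by
  cases x <;> cases y <;> simp [completeBipartiteGraph] <;> infer_instance

/-- The closed-neighbourhood sums at `x` and `y` then differ only by the labels of `x` and `y`. -/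
theorem IsClosedDistanceMagic.eq_of_neighborFinset_eq {V : Type*} [Fintype V] [DecidableEq V]
    {G : SimpleGraph V} [DecidableRel G.Adj] (hG : IsClosedDistanceMagic G) {x y : V}
    (hxy : G.neighborFinset x = G.neighborFinset y) : x = y := by
  obtain ⟨k, -, ℓ, hℓ⟩ := hG
  have hx := hℓ x
  have hy := hℓ y
  rw [sum_insert (G.notMem_neighborFinset_self x)] at hx
  rw [sum_insert (G.notMem_neighborFinset_self y), ← hxy] at hy
  exact ℓ.injective (Fin.ext (by omega))

theorem completeBipartiteGraph_neighborFinset_inl {α β : Type*} [Fintype α] [Fintype β]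
    [DecidableRel (completeBipartiteGraph α β).Adj] (a : α) :
    (completeBipartiteGraph α β).neighborFinset (Sum.inl a) = univ.map .inr := by
  ext y
  cases y <;> simp

theorem stmt_3_general (m n : ℕ) (hm : 2 ≤ m) :
    ¬ IsClosedDistanceMagic (completeBipartiteGraph (Fin m) (Fin n)) := by
  intro hG
  have h01 : (Sum.inl ⟨0, by omega⟩ : Fin m ⊕ Fin n) = Sum.inl ⟨1, by omega⟩ :=
    hG.eq_of_neighborFinset_eq (by simp only [completeBipartiteGraph_neighborFinset_inl])
  simp at h01

theorem stmt_3 (m n : ℕ) (hm : 2 ≤ m) (hmn : m ≤ n) :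
    ¬ IsClosedDistanceMagic (completeBipartiteGraph (Fin m) (Fin n)) :=
  stmt_3_general m n hm
end

section
/- If a connected strongly regular graph G on n vertices admits a closed distance magic labeling, then G is isomorphic to the complete graph K_n. -/
open Finset SimpleGraph

/-! Recentre the labels as `g = 2 · label - (n + 1)`, so that `g` sums to zero. Double counting
the magic constant shows that the closed-neighbourhood sums of `g` vanish, i.e. `A g = -g` for
the adjacency matrix `A`. Applying `A² = r I + a A + b (J - I - A)` to `g` then gives
`g = (r - a) g`, and `g ≠ 0`, so `r = a + 1`: two adjacent vertices share all other neighbours.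
Hence every neighbourhood is a clique, and a connected graph with this property is complete. -/

open Matrix

theorem Fin.sum_two_mul_add_one_sub_eq_zero (N : ℕ) :
    ∑ i : Fin N, (2 * (i : ℤ) + 1 - N) = 0 := by
  have hodd : ∀ m, ∑ i ∈ range m, (2 * (i : ℤ) + 1) = m ^ 2 := by
    intro m
    induction m with
    | zero => simp
    | succ m ih => rw [sum_range_succ, ih]; push_cast; ring
  rw [Fin.sum_univ_eq_sum_range (fun i => 2 * (i : ℤ) + 1 - N), sum_sub_distrib, hodd]
  simp [sq]

/-- The label `ℓ v + 1 ∈ {1, …, n}` recentred as `2 (ℓ v + 1) - (n + 1)`. -/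
def centeredLabel {V : Type*} [Fintype V] (ℓ : V ≃ Fin (Fintype.card V)) (v : V) : ℤ :=
  2 * (ℓ v : ℤ) + 1 - Fintype.card V

theorem sum_centeredLabel {V : Type*} [Fintype V] (ℓ : V ≃ Fin (Fintype.card V)) :
    ∑ v, centeredLabel ℓ v = 0 :=
  (Equiv.sum_comp ℓ fun i => 2 * (i : ℤ) + 1 - Fintype.card V).trans
    (Fin.sum_two_mul_add_one_sub_eq_zero _)

theorem exists_centeredLabel_ne_zero {V : Type*} [Fintype V] [Nontrivial V]
    (ℓ : V ≃ Fin (Fintype.card V)) : ∃ v, centeredLabel ℓ v ≠ 0 := by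
  refine ⟨ℓ.symm ⟨0, Fintype.card_pos⟩, ?_⟩
  have := Fintype.one_lt_card (α := V)
  simp only [centeredLabel, Equiv.apply_symm_apply]
  omega

namespace SimpleGraph

theorem Preconnected.eq_top_of_isClique_neighborSet {V : Type*} {G : SimpleGraph V}
    (hG : G.Preconnected) (h : ∀ u, G.IsClique (G.neighborSet u)) : G = ⊤ := by
  have walk_ends : ∀ {x y : V}, G.Walk x y → x = y ∨ G.Adj x y := by
    intro x y p
    induction p with
    | nil => exact Or.inl rfl
    | @cons x u y hxu _ ih =>
      rcases ih with rfl | huy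
      · exact Or.inr hxu
      · exact (eq_or_ne x y).imp id fun hxy => h u hxu.symm huy hxy
  ext x y
  refine ⟨Adj.ne, fun hxy => ?_⟩
  obtain ⟨p⟩ := hG x y
  exact (walk_ends p).resolve_left hxy

variable {V : Type*} [Fintype V] {G : SimpleGraph V} [DecidableRel G.Adj] {α : Type*}

theorem compl_adjMatrix_mulVec [DecidableEq V] [Ring α] (g : V → α) :
    Gᶜ.adjMatrix α *ᵥ g = Function.const V (∑ v, g v) - g - G.adjMatrix α *ᵥ g := by
  classical
  rw [← compl_adjMatrix_eq_adjMatrix_compl,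
    eq_sub_of_add_eq' (G.one_add_adjMatrix_add_compl_adjMatrix_eq_of_one (α := α)),
    sub_mulVec, add_mulVec, one_mulVec]
  ext v
  simp only [Pi.sub_apply, Pi.add_apply, mulVec, dotProduct, of_apply, Pi.one_apply, one_mul,
    adjMatrix_apply, ite_mul, zero_mul, Function.const_apply]
  abel

theorem IsRegularOfDegree.sum_adjMatrix_mulVec [Semiring α] {d : ℕ}
    (hd : G.IsRegularOfDegree d) (f : V → α) : ∑ v, (G.adjMatrix α *ᵥ f) v = d • ∑ v, f v := by
  have hdeg : (1 : V → α) ᵥ* G.adjMatrix α = Function.const V (d : α) := by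
    ext v
    simp [adjMatrix_vecMul_apply, hd v]
  rw [← one_dotProduct, dotProduct_mulVec, hdeg]
  simp [dotProduct, nsmul_eq_mul, mul_sum]

theorem IsRegularOfDegree.adjMatrix_mulVec_eq_neg {d : ℕ} (hd : G.IsRegularOfDegree d)
    {f : V → ℤ} {c : ℤ} (hc : ∀ v, f v + (G.adjMatrix ℤ *ᵥ f) v = c) (hsum : ∑ v, f v = 0) :
    G.adjMatrix ℤ *ᵥ f = -f := by
  ext v
  have hc0 : Fintype.card V • c = 0 := by
    rw [← card_univ, ← sum_const, ← univ.sum_congr rfl fun v _ => hc v, sum_add_distrib,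
      hd.sum_adjMatrix_mulVec, hsum, smul_zero, add_zero]
  have : c = 0 := (smul_eq_zero.mp hc0).resolve_left (Fintype.card_pos_iff.mpr ⟨v⟩).ne'
  have := hc v
  simp only [Pi.neg_apply]
  omega

theorem IsSRGWith.nsmul_eq_of_adjMatrix_mulVec_eq_neg [DecidableEq V] [Ring α] {n r a b : ℕ}
    (h : G.IsSRGWith n r a b) {g : V → α} (hA : G.adjMatrix α *ᵥ g = -g)
    (hsum : ∑ v, g v = 0) : r • g = (a + 1) • g := by
  have hsq : G.adjMatrix α ^ 2 *ᵥ g = g := by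
    rw [sq, ← mulVec_mulVec, hA, mulVec_neg, hA, neg_neg]
  have hcompl : Gᶜ.adjMatrix α *ᵥ g = 0 := by
    rw [compl_adjMatrix_mulVec, hA, hsum]
    ext
    simp
  rw [h.matrix_eq, add_mulVec, add_mulVec, smul_mulVec, smul_mulVec, smul_mulVec, one_mulVec,
    hA, hcompl, smul_zero, add_zero] at hsq
  rw [add_smul, one_smul]
  nth_rewrite 3 [← hsq]
  simp only [smul_neg]
  abel

theorem IsSRGWith.isClique_neighborSet {n a b : ℕ} (h : G.IsSRGWith n (a + 1) a b) (u : V) :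
    G.IsClique (G.neighborSet u) := by
  classical
  intro v huv w huw hvw
  have hsub : (G.commonNeighbors u v).toFinset ⊆ (G.neighborFinset u).erase v := by
    intro z hz
    simp only [Set.mem_toFinset, mem_commonNeighbors] at hz
    exact mem_erase.mpr ⟨(G.ne_of_adj hz.2).symm, (G.mem_neighborFinset u z).mpr hz.1⟩
  have hcard : ((G.neighborFinset u).erase v).card ≤ (G.commonNeighbors u v).toFinset.card := by
    rw [card_erase_of_mem ((G.mem_neighborFinset u v).mpr huv), card_neighborFinset_eq_degree,
      h.regular u, Set.toFinset_card, h.of_adj u v huv, add_tsub_cancel_right]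
  have hw : w ∈ (G.commonNeighbors u v).toFinset := by
    rw [eq_of_subset_of_card_le hsub hcard]
    exact mem_erase.mpr ⟨hvw.symm, (G.mem_neighborFinset u w).mpr huw⟩
  simp only [Set.mem_toFinset, mem_commonNeighbors] at hw
  exact hw.2

end SimpleGraph

section ClosedDistanceMagic

variable {V : Type*} [Fintype V] [DecidableEq V] {G : SimpleGraph V} [DecidableRel G.Adj]

theorem IsClosedDistanceMagic.exists_adjMatrix_mulVec_centeredLabel {d : ℕ}
    (hd : G.IsRegularOfDegree d) (hG : IsClosedDistanceMagic G) :
    ∃ ℓ : V ≃ Fin (Fintype.card V), G.adjMatrix ℤ *ᵥ centeredLabel ℓ = -centeredLabel ℓ := by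
  obtain ⟨k, -, ℓ, hℓ⟩ := hG
  refine ⟨ℓ, hd.adjMatrix_mulVec_eq_neg (c := 2 * k - (d + 1) * (Fintype.card V + 1))
    (fun v => ?_) (sum_centeredLabel ℓ)⟩
  have hk : ∑ y ∈ insert v (G.neighborFinset v), ((ℓ y : ℤ) + 1) = k := by exact_mod_cast hℓ v
  have hcard : (insert v (G.neighborFinset v)).card = d + 1 := by
    rw [card_insert_of_notMem (G.notMem_neighborFinset_self v), card_neighborFinset_eq_degree,
      hd v]
  rw [adjMatrix_mulVec_apply, ← sum_insert (G.notMem_neighborFinset_self v), ← hk]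
  simp only [centeredLabel, sum_sub_distrib, sum_add_distrib, ← mul_sum, sum_const, hcard]
  ring

theorem SimpleGraph.IsSRGWith.eq_add_one_of_isClosedDistanceMagic [Nontrivial V] {n r a b : ℕ}
    (h : G.IsSRGWith n r a b) (hG : IsClosedDistanceMagic G) : r = a + 1 := by
  obtain ⟨ℓ, hA⟩ := hG.exists_adjMatrix_mulVec_centeredLabel h.regular
  obtain ⟨v, hv⟩ := exists_centeredLabel_ne_zero ℓ
  have := congr_fun (h.nsmul_eq_of_adjMatrix_mulVec_eq_neg hA (sum_centeredLabel ℓ)) v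
  simp only [Pi.smul_apply, nsmul_eq_mul] at this
  exact_mod_cast mul_right_cancel₀ hv this

end ClosedDistanceMagic

theorem stmt_6_general {V : Type*} [Fintype V] [DecidableEq V]
    (G : SimpleGraph V) [DecidableRel G.Adj] (n r a b : ℕ)
    (hconn : G.Connected)
    (hsrg : G.IsSRGWith n r a b)
    (hmagic : IsClosedDistanceMagic G) :
    Nonempty (G ≃g (⊤ : SimpleGraph (Fin n))) := by
  have hG : G = ⊤ := by
    cases subsingleton_or_nontrivial V
    · ext x y
      simp [Subsingleton.elim x y]
    · obtain rfl := hsrg.eq_add_one_of_isClosedDistanceMagic hmagic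
      exact hconn.preconnected.eq_top_of_isClique_neighborSet hsrg.isClique_neighborSet
  rw [hG, ← hsrg.card]
  exact ⟨Iso.completeGraph (Fintype.equivFin V)⟩

theorem stmt_6 {V : Type*} [Fintype V] [DecidableEq V]
    (G : SimpleGraph V) [DecidableRel G.Adj] (n r a b : ℕ)
    (hn : Fintype.card V = n) (hconn : G.Connected)
    (hsrg : G.IsSRGWith n r a b) (hb : 1 ≤ b)
    (hmagic : IsClosedDistanceMagic G) :
    Nonempty (G ≃g (⊤ : SimpleGraph (Fin n))) :=
  stmt_6_general G n r a b hconn hsrg hmagic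
end

section
/- The only cycle admitting a closed distance magic labeling is C_3. -/
open Finset SimpleGraph

/-! In `C_n` with `n ≥ 4` the closed neighborhoods of the vertices `1` and `2` are
`{0, 1, 2}` and `{1, 2, 3}`; equal sums over them force `ℓ 0 = ℓ 3`, contradicting
injectivity. Conversely `C_3` is the complete graph `K_3`, where every closed neighborhood
is the whole vertex set, so any bijective labeling is closed distance magic. -/

section

variable {V : Type*} [Fintype V] [DecidableEq V]

theorem IsClosedDistanceMagicWith.eq_of_insert_eq_insert {G : SimpleGraph V}
    [DecidableRel G.Adj] {k : ℕ} (h : IsClosedDistanceMagicWith G k) {x y a b : V}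
    {s : Finset V} (ha : a ∉ s) (hb : b ∉ s)
    (hx : insert x (G.neighborFinset x) = insert a s)
    (hy : insert y (G.neighborFinset y) = insert b s) : a = b := by
  obtain ⟨-, ℓ, hℓ⟩ := h
  have hsum := (hℓ x).trans (hℓ y).symm
  rw [hx, hy, sum_insert ha, sum_insert hb, Nat.add_right_cancel_iff,
    Nat.add_right_cancel_iff] at hsum
  exact ℓ.injective (Fin.ext hsum)

theorem isClosedDistanceMagic_top [Nonempty V] : IsClosedDistanceMagic (⊤ : SimpleGraph V) := by
  refine ⟨∑ i : Fin (Fintype.card V), ((i : ℕ) + 1), ?_, Fintype.equivFin V, fun x => ?_⟩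
  · have : Nonempty (Fin (Fintype.card V)) := (Fintype.equivFin V).nonempty_congr.mp ‹_›
    exact sum_pos (fun i _ => Nat.succ_pos i) univ_nonempty
  · rw [neighborFinset_top, insert_compl_self]
    exact (Fintype.equivFin V).sum_comp fun i => (i : ℕ) + 1

end

theorem cycleGraph_closedNeighborFinset {n : ℕ} (v : Fin (n + 2)) :
    insert v ((cycleGraph (n + 2)).neighborFinset v) = {v - 1, v, v + 1} := by
  rw [cycleGraph_neighborFinset, insert_comm]

theorem not_isClosedDistanceMagic_cycleGraph {n : ℕ} (hn : 4 ≤ n) :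
    ¬ IsClosedDistanceMagic (cycleGraph n) := by
  obtain ⟨m, rfl⟩ : ∃ m, n = m + 2 := ⟨n - 2, by omega⟩
  rintro ⟨k, h⟩
  have two : (1 + 1 : Fin (m + 2)) = 2 := by ext; simp [Fin.val_add]
  have three : (2 + 1 : Fin (m + 2)) = 3 := by ext; simp [Fin.val_add]
  have hN1 : insert 1 ((cycleGraph (m + 2)).neighborFinset 1) = insert 0 {1, 2} := by
    rw [cycleGraph_closedNeighborFinset, sub_self, two]
  have hN2 : insert 2 ((cycleGraph (m + 2)).neighborFinset 2) = insert 3 {1, 2} := by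
    rw [cycleGraph_closedNeighborFinset, three, sub_eq_of_eq_add two.symm, pair_comm, insert_comm]
  have mod_two : 2 % (m + 2) = 2 := Nat.mod_eq_of_lt (by omega)
  have mod_three : 3 % (m + 2) = 3 := Nat.mod_eq_of_lt (by omega)
  have h03 : (0 : Fin (m + 2)) = 3 :=
    h.eq_of_insert_eq_insert (by simp [Fin.ext_iff, mod_two])
      (by simp [Fin.ext_iff, mod_two, mod_three]) hN1 hN2
  simp [Fin.ext_iff, mod_three] at h03

theorem stmt_9 (n : ℕ) (hn : 3 ≤ n) :
    IsClosedDistanceMagic (cycleGraph n) ↔ n = 3 := by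
  constructor
  · intro h
    by_contra hne
    exact not_isClosedDistanceMagic_cycleGraph (by omega) h
  · rintro rfl
    convert isClosedDistanceMagic_top (V := Fin 3)
    exact cycleGraph_three_eq_top
end

section
/- For every positive integer m with m ≡ 3 (mod 6), the set {1,...,m} can be partitioned into m/3 pairwise disjoint triples each having element sum 3(m+1)/2. -/
/-!
Write `m = 6k + 3`, so the triples must sum to `9k + 6`. For `1 ≤ l ≤ k` take
`{l, 3k + 2 + l, 6k + 4 - 2l}` and for `k < l ≤ 2k + 1` take `{l, k + 1 + l, 8k + 5 - 2l}`.
The smallest entries run through `1, …, 2k + 1`, the middle ones through `3k + 3, …, 4k + 2` and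
`2k + 2, …, 3k + 2`, and the largest ones through the even, respectively odd, numbers of
`4k + 3, …, 6k + 3`. So the `2k + 1` triples are pairwise disjoint subsets of `{1, …, 6k + 3}`
of size three, and counting shows that they cover it.
-/

open Finset

namespace TripleSumPartition

def triple (k l : ℕ) : Finset ℕ :=
  if l ≤ k then {l, 3 * k + 2 + l, 6 * k + 4 - 2 * l} else {l, k + 1 + l, 8 * k + 5 - 2 * l}

variable {k l : ℕ}

theorem mem_triple {x : ℕ} :
    x ∈ triple k l ↔
      (l ≤ k ∧ (x = l ∨ x = 3 * k + 2 + l ∨ x = 6 * k + 4 - 2 * l)) ∨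
      (k < l ∧ (x = l ∨ x = k + 1 + l ∨ x = 8 * k + 5 - 2 * l)) := by
  unfold triple
  split_ifs <;> simp only [mem_insert, mem_singleton] <;> omega

theorem card_triple (hl : l ≤ 2 * k + 1) : #(triple k l) = 3 := by
  unfold triple
  split_ifs <;> exact card_eq_three.2 ⟨_, _, _, by omega, by omega, by omega, rfl⟩

theorem sum_triple (hl : l ≤ 2 * k + 1) : ∑ x ∈ triple k l, x = 9 * k + 6 := by
  unfold triple
  split_ifs <;>
    rw [sum_insert (by simp only [mem_insert, mem_singleton]; omega),
      sum_insert (by simp only [mem_singleton]; omega), sum_singleton] <;>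
    omega

theorem triple_subset_Icc (hl : l ∈ Icc 1 (2 * k + 1)) : triple k l ⊆ Icc 1 (6 * k + 3) := by
  intro x hx
  rw [mem_Icc] at hl ⊢
  rw [mem_triple] at hx
  omega

theorem injOn_triple : Set.InjOn (triple k) (Icc 1 (2 * k + 1)) := by
  intro a ha b hb hab
  rw [coe_Icc, Set.mem_Icc] at ha hb
  have hself : a ∈ triple k a := mem_triple.2 (by omega)
  rw [hab, mem_triple] at hself
  omega

theorem pairwiseDisjoint_triple : (Icc 1 (2 * k + 1) : Set ℕ).PairwiseDisjoint (triple k) := by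
  intro a ha b hb hab
  rw [coe_Icc, Set.mem_Icc] at ha hb
  refine disjoint_left.2 fun x hxa hxb => ?_
  rw [mem_triple] at hxa hxb
  omega

theorem biUnion_triple : (Icc 1 (2 * k + 1)).biUnion (triple k) = Icc 1 (6 * k + 3) := by
  refine eq_of_subset_of_card_le (biUnion_subset.2 fun l hl => triple_subset_Icc hl) ?_
  rw [card_biUnion pairwiseDisjoint_triple,
    sum_congr rfl fun l hl => card_triple (mem_Icc.1 hl).2, sum_const, smul_eq_mul,
    Nat.card_Icc, Nat.card_Icc]
  omega

end TripleSumPartition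

open TripleSumPartition in
theorem stmt_11_general (m : ℕ) (h : m % 6 = 3) :
    ∃ T : Finset (Finset ℕ),
      T.card = m / 3 ∧
      (∀ t ∈ T, t.card = 3 ∧ ∑ x ∈ t, x = 3 * (m + 1) / 2) ∧
      (T : Set (Finset ℕ)).PairwiseDisjoint id ∧
      T.biUnion id = Finset.Icc 1 m := by
  obtain ⟨k, rfl⟩ : ∃ k, m = 6 * k + 3 := ⟨m / 6, by omega⟩
  refine ⟨(Icc 1 (2 * k + 1)).image (triple k), ?_, ?_, ?_, ?_⟩
  · rw [card_image_of_injOn injOn_triple, Nat.card_Icc]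
    omega
  · refine forall_mem_image.2 fun l hl => ?_
    have hl' : l ≤ 2 * k + 1 := (mem_Icc.1 hl).2
    exact ⟨card_triple hl', by rw [sum_triple hl']; omega⟩
  · rw [coe_image, injOn_triple.pairwiseDisjoint_image]
    exact pairwiseDisjoint_triple
  · rw [image_biUnion]
    exact biUnion_triple

theorem stmt_11 (m : ℕ) (hm : 0 < m) (h : m % 6 = 3) :
    ∃ T : Finset (Finset ℕ),
      T.card = m / 3 ∧
      (∀ t ∈ T, t.card = 3 ∧ ∑ x ∈ t, x = 3 * (m + 1) / 2) ∧
      (T : Set (Finset ℕ)).PairwiseDisjoint id ∧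
      T.biUnion id = Finset.Icc 1 m :=
  stmt_11_general m h
end

section
/- If m ≡ 3 (mod 6) and n ≡ 3 (mod 6), then the strong product C_m ⊠ C_n admits a closed distance magic labeling. -/
open Finset SimpleGraph

/-- The strong product of two simple graphs. -/
def strongProd {α β : Type*} (G : SimpleGraph α) (H : SimpleGraph β) :
    SimpleGraph (α × β) where
  Adj p q := p ≠ q ∧ (p.1 = q.1 ∨ G.Adj p.1 q.1) ∧ (p.2 = q.2 ∨ H.Adj p.2 q.2)
  symm := ⟨by
    rintro p q ⟨h1, h2, h3⟩
    exact ⟨h1.symm, h2.elim (fun e => Or.inl e.symm) (fun a => Or.inr a.symm),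
      h3.elim (fun e => Or.inl e.symm) (fun a => Or.inr a.symm)⟩⟩
  loopless := ⟨fun p h => h.1 rfl⟩

instance {α β : Type*} [DecidableEq α] [DecidableEq β] (G : SimpleGraph α)
    (H : SimpleGraph β) [DecidableRel G.Adj] [DecidableRel H.Adj] :
    DecidableRel (strongProd G H).Adj := fun p q =>
  inferInstanceAs (Decidable (p ≠ q ∧ (p.1 = q.1 ∨ G.Adj p.1 q.1) ∧ (p.2 = q.2 ∨ H.Adj p.2 q.2)))

/-!
Write `m = 3a`, `n = 3b` and split coordinates as `i = 3u + r`, `j = 3v + s` with `r, s < 3`.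
Since `3 ∣ m`, the closed neighbourhood `{i - 1, i, i + 1}` of a vertex of `C_m` meets every
residue class mod 3 exactly once, and likewise in `C_n`. Take partitions `α(u, ·)` of `{0, …, m-1}`
and `β(v, ·)` of `{0, …, n-1}` into triples of equal sums `A` and `B`, and label `(i, j)` by
`n α(u, s) + β(v, r) + 1`. Summing over a closed neighbourhood `N[i] × N[j]`, for each of the three
`i' ∈ N[i]` the residues `s` run through a whole triple of `α`, and symmetrically for `β`, so every
closed neighbourhood sums to `3nA + 3B + 9`.
-/

theorem strongProd_closedNbhd {α β : Type*} [Fintype α] [Fintype β] [DecidableEq α]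
    [DecidableEq β] (G : SimpleGraph α) (H : SimpleGraph β) [DecidableRel G.Adj]
    [DecidableRel H.Adj] (x : α × β) :
    insert x ((strongProd G H).neighborFinset x) =
      insert x.1 (G.neighborFinset x.1) ×ˢ insert x.2 (H.neighborFinset x.2) := by
  ext y
  simp only [mem_insert, mem_neighborFinset, mem_product]
  simp only [strongProd, Prod.ext_iff, ne_eq]
  tauto

theorem cycleGraph_closedNbhd {n : ℕ} [NeZero n] (v : Fin n) :
    insert v ((cycleGraph n).neighborFinset v) = {v - 1, v, v + 1} := by
  obtain _ | _ | n := n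
  · exact (NeZero.ne 0 rfl).elim
  · ext w
    simp [Fin.fin_one_eq_zero]
  · rw [cycleGraph_neighborFinset, insert_comm]

theorem Fin.modNat_add {a n : ℕ} (i j : Fin (a * n)) :
    (i + j).modNat = i.modNat + j.modNat := by
  ext
  simp [Fin.val_add, Nat.mod_mod_of_dvd _ (Dvd.intro_left a rfl), Nat.add_mod]

theorem Fin.modNat_sub {a n : ℕ} [NeZero a] [NeZero n] (i j : Fin (a * n)) :
    (i - j).modNat = i.modNat - j.modNat :=
  eq_sub_of_add_eq (by rw [← Fin.modNat_add, sub_add_cancel])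

theorem Fin.modNat_one {a n : ℕ} [NeZero a] [NeZero n] : (1 : Fin (a * n)).modNat = 1 := by
  ext
  simp [Nat.mod_mod_of_dvd _ (Dvd.intro_left a rfl)]

theorem sum_cycleGraph_closedNbhd_modNat {M : Type*} [AddCommMonoid M] {a : ℕ} [NeZero a]
    (g : Fin 3 → M) (v : Fin (a * 3)) :
    ∑ w ∈ insert v ((cycleGraph (a * 3)).neighborFinset v), g w.modNat = ∑ r, g r := by
  have hsub : (v - 1).modNat = v.modNat - 1 := by rw [Fin.modNat_sub, Fin.modNat_one]
  have hadd : (v + 1).modNat = v.modNat + 1 := by rw [Fin.modNat_add, Fin.modNat_one]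
  have hne : ∀ r : Fin 3, r - 1 ≠ r ∧ r - 1 ≠ r + 1 ∧ r ≠ r + 1 := by decide
  have hsum : ∀ r : Fin 3, g (r - 1) + (g r + g (r + 1)) = ∑ r, g r := by
    intro r
    obtain rfl | rfl | rfl : r = 0 ∨ r = 1 ∨ r = 2 := by fin_cases r <;> simp
    all_goals simp only [Fin.sum_univ_three, Fin.reduceSub, Fin.reduceAdd]; abel
  obtain ⟨h₁, h₂, h₃⟩ := hne v.modNat
  rw [cycleGraph_closedNbhd, sum_insert, sum_insert, sum_singleton, hsub, hadd, hsum]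
  · exact fun h => h₃ ((congrArg Fin.modNat (mem_singleton.1 h)).trans hadd)
  · simp only [mem_insert, mem_singleton]
    rintro (h | h)
    · exact h₁ (by rw [← hsub, h])
    · exact h₂ (by rw [← hsub, h, hadd])

def tripleShift (t u : ℕ) : ℕ := if u ≤ t then u + t else u - t - 1

theorem tripleShift_cases (t u : ℕ) :
    u ≤ t ∧ tripleShift t u = u + t ∨ t < u ∧ tripleShift t u + t + 1 = u := by
  unfold tripleShift
  split_ifs <;> omega

/-- Row `u` of a partition of `{0, …, 6t + 2}` into `2t + 1` triples of sum `9t + 3`. Here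
`tripleShift t u = (u + t) mod (2t + 1)`, so `u + tripleShift t u` runs over `[t, 3t]` and the three
columns run over `[0, 2t]`, `[2t + 1, 4t + 1]` and `[4t + 2, 6t + 2]`. -/
def equalSumTriple (t u : ℕ) : Fin 3 → ℕ :=
  ![3 * t - (u + tripleShift t u), 2 * t + 1 + u, 4 * t + 2 + tripleShift t u]

theorem equalSumTriple_lt {t u : ℕ} (hu : u < 2 * t + 1) (r : Fin 3) :
    equalSumTriple t u r < (2 * t + 1) * 3 := by
  have := tripleShift_cases t u
  fin_cases r <;> simp [equalSumTriple] <;> omega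

theorem equalSumTriple_injective {t u u' : ℕ} {r r' : Fin 3} (hu : u < 2 * t + 1)
    (hu' : u' < 2 * t + 1) (h : equalSumTriple t u r = equalSumTriple t u' r') :
    u = u' ∧ r = r' := by
  have := tripleShift_cases t u
  have := tripleShift_cases t u'
  fin_cases r <;> fin_cases r' <;> simp [equalSumTriple] at h ⊢ <;> omega

theorem sum_equalSumTriple {t u : ℕ} (hu : u < 2 * t + 1) :
    ∑ r, equalSumTriple t u r = 9 * t + 3 := by
  have := tripleShift_cases t u
  simp [equalSumTriple, Fin.sum_univ_three]
  omega

theorem exists_equalSum_triples (t : ℕ) :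
    ∃ τ : Fin (2 * t + 1) × Fin 3 ≃ Fin ((2 * t + 1) * 3),
      ∀ u, ∑ r, (τ (u, r) : ℕ) = 9 * t + 3 := by
  let f (p : Fin (2 * t + 1) × Fin 3) : Fin ((2 * t + 1) * 3) :=
    ⟨equalSumTriple t p.1 p.2, equalSumTriple_lt p.1.isLt p.2⟩
  have hf : Function.Injective f := fun p q h => by
    obtain ⟨h₁, h₂⟩ := equalSumTriple_injective p.1.isLt q.1.isLt (Fin.val_eq_of_eq h)
    exact Prod.ext (Fin.ext h₁) h₂
  exact ⟨Equiv.ofBijective f ((Fintype.bijective_iff_injective_and_card f).2 ⟨hf, by simp⟩),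
    fun u => sum_equalSumTriple u.isLt⟩

section CrossLabeling

variable {a b : ℕ}

def swapResidues : (Fin a × Fin 3) × (Fin b × Fin 3) ≃ (Fin a × Fin 3) × (Fin b × Fin 3) where
  toFun p := ((p.1.1, p.2.2), (p.2.1, p.1.2))
  invFun p := ((p.1.1, p.2.2), (p.2.1, p.1.2))
  left_inv _ := rfl
  right_inv _ := rfl

def crossLabeling (α : Fin a × Fin 3 ≃ Fin (a * 3)) (β : Fin b × Fin 3 ≃ Fin (b * 3)) :
    Fin (a * 3) × Fin (b * 3) ≃ Fin (a * 3 * (b * 3)) :=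
  (finProdFinEquiv.symm.prodCongr finProdFinEquiv.symm).trans <|
    swapResidues.trans <| (α.prodCongr β).trans finProdFinEquiv

theorem crossLabeling_apply (α : Fin a × Fin 3 ≃ Fin (a * 3)) (β : Fin b × Fin 3 ≃ Fin (b * 3))
    (x : Fin (a * 3) × Fin (b * 3)) :
    (crossLabeling α β x : ℕ) =
      β (x.2.divNat, x.1.modNat) + b * 3 * α (x.1.divNat, x.2.modNat) :=
  rfl

theorem sum_closedNbhd_divNat_modNat [NeZero a] [NeZero b] {F : Fin a → Fin 3 → ℕ} {A : ℕ}
    (hF : ∀ u, ∑ r, F u r = A) (i : Fin (a * 3)) (j : Fin (b * 3)) :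
    ∑ i' ∈ insert i ((cycleGraph (a * 3)).neighborFinset i),
      ∑ j' ∈ insert j ((cycleGraph (b * 3)).neighborFinset j), F i'.divNat j'.modNat = 3 * A := by
  simp only [sum_cycleGraph_closedNbhd_modNat (F _), hF]
  simpa using sum_cycleGraph_closedNbhd_modNat (fun _ => A) i

theorem isClosedDistanceMagicWith_crossLabeling [NeZero a] [NeZero b] {A B : ℕ}
    (α : Fin a × Fin 3 ≃ Fin (a * 3)) (β : Fin b × Fin 3 ≃ Fin (b * 3))
    (hα : ∀ u, ∑ r, (α (u, r) : ℕ) = A) (hβ : ∀ v, ∑ r, (β (v, r) : ℕ) = B) :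
    IsClosedDistanceMagicWith (strongProd (cycleGraph (a * 3)) (cycleGraph (b * 3)))
      (3 * B + 3 * (b * 3 * A) + 9) := by
  refine ⟨by positivity, (crossLabeling α β).trans (finCongr (by simp)), fun x => ?_⟩
  have hα' : ∀ u, ∑ r, b * 3 * (α (u, r) : ℕ) = b * 3 * A := fun u => by rw [← mul_sum, hα]
  rw [strongProd_closedNbhd, sum_product]
  simp only [Equiv.trans_apply, finCongr_apply, Fin.val_cast, crossLabeling_apply,
    sum_add_distrib]
  rw [sum_comm (s := insert x.1 _), sum_closedNbhd_divNat_modNat hβ,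
    sum_closedNbhd_divNat_modNat hα']
  simpa using sum_closedNbhd_divNat_modNat (F := fun _ _ => 1) (A := 3) (by simp) x.1 x.2

end CrossLabeling

theorem stmt_12 (m n : ℕ) (hm : m % 6 = 3) (hn : n % 6 = 3) :
    IsClosedDistanceMagic (strongProd (cycleGraph m) (cycleGraph n)) := by
  obtain ⟨t, rfl⟩ : ∃ t, m = (2 * t + 1) * 3 := ⟨m / 6, by omega⟩
  obtain ⟨w, rfl⟩ : ∃ w, n = (2 * w + 1) * 3 := ⟨n / 6, by omega⟩
  obtain ⟨α, hα⟩ := exists_equalSum_triples t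
  obtain ⟨β, hβ⟩ := exists_equalSum_triples w
  exact ⟨_, isClosedDistanceMagicWith_crossLabeling α β hα hβ⟩
end

section
/- Let G = Ci(n, {c, 2c, ..., kc}) with k ≥ 1. If G admits a closed distance magic labeling, then n = 2kc or n = (2k+1)c. -/
/-!
The closed neighbourhood of `x` in `Ci(n, {c, …, kc})` is `{x + jc : -k ≤ j ≤ k}`, so the closed
neighbourhoods of `0` and `c` share `{jc : -k < j ≤ k}` and differ only in `-kc` and `(k+1)c`.
Equal magic sums force these two vertices to carry the same label, hence to coincide, so
`n ∣ (2k+1)c`. When `2kc < n` this leaves only `n = (2k+1)c`.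
-/

open Finset SimpleGraph

/-- The jump set `{c, 2c, …, kc}` of the circulant graph `Ci(n, {c, 2c, …, kc})`,
viewed inside `ZMod n`. -/
def circJumps (n c k : ℕ) : Set (ZMod n) :=
  ↑((Finset.Icc 1 k).image (fun i => ((i * c : ℕ) : ZMod n)))

instance (n c k : ℕ) : DecidablePred (· ∈ circJumps n c k) := fun z => by
  unfold circJumps; infer_instance

theorem IsClosedDistanceMagicWith.eq_of_closedNbhd_eq_insert {V : Type*} [Fintype V]
    [DecidableEq V] {G : SimpleGraph V} [DecidableRel G.Adj] {κ : ℕ}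
    (h : IsClosedDistanceMagicWith G κ) {x y a b : V} {s : Finset V} (ha : a ∉ s) (hb : b ∉ s)
    (hx : insert x (G.neighborFinset x) = insert a s)
    (hy : insert y (G.neighborFinset y) = insert b s) : a = b := by
  obtain ⟨-, ℓ, hℓ⟩ := h
  have hsum := (hℓ x).trans (hℓ y).symm
  rw [hx, hy, sum_insert ha, sum_insert hb, add_left_inj, add_left_inj] at hsum
  exact ℓ.injective (Fin.ext hsum)

theorem mem_circJumps {n c k : ℕ} {z : ZMod n} :
    z ∈ circJumps n c k ↔ ∃ j : ℤ, 1 ≤ j ∧ j ≤ k ∧ (j : ZMod n) * c = z := by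
  simp only [circJumps, coe_image, Set.mem_image, mem_coe, mem_Icc]
  constructor
  · rintro ⟨i, ⟨hi1, hik⟩, rfl⟩
    exact ⟨i, by omega, by omega, by push_cast; rfl⟩
  · rintro ⟨j, hj1, hjk, rfl⟩
    lift j to ℕ using by omega
    exact ⟨j, ⟨by omega, by omega⟩, by push_cast; rfl⟩

theorem closedNbhd_circulantGraph_circJumps (n c k : ℕ) [NeZero n] (x : ZMod n) :
    insert x ((circulantGraph (circJumps n c k)).neighborFinset x)
      = (Icc (-(k : ℤ)) k).image (fun j : ℤ => x + j * c) := by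
  ext y
  simp only [mem_insert, mem_neighborFinset, circulantGraph_adj, mem_circJumps, mem_image,
    mem_Icc]
  constructor
  · rintro (rfl | ⟨-, ⟨j, hj1, hjk, hj⟩ | ⟨j, hj1, hjk, hj⟩⟩)
    · exact ⟨0, by omega, by simp⟩
    · exact ⟨-j, by omega, by push_cast; linear_combination -hj⟩
    · exact ⟨j, by omega, by linear_combination hj⟩
  · rintro ⟨j, hjk, rfl⟩
    by_cases hx : x = x + j * c
    · exact .inl hx.symm
    refine .inr ⟨hx, ?_⟩
    rcases lt_trichotomy j 0 with hj | rfl | hj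
    · exact .inl ⟨-j, by omega, by omega, by push_cast; ring⟩
    · simp at hx
    · exact .inr ⟨j, by omega, by omega, by ring⟩

theorem eq_zero_of_intCast_mul_eq_zero {n c : ℕ} (hc : c ≠ 0) {j : ℤ} (hj : |j| * c < n)
    (h : (j : ZMod n) * c = 0) : j = 0 := by
  have hdvd : (n : ℤ) ∣ j * c := by
    rw [← ZMod.intCast_zmod_eq_zero_iff_dvd]
    push_cast
    exact h
  have hjc : j * c = 0 :=
    Int.eq_zero_of_abs_lt_dvd hdvd (by rw [abs_mul, Nat.abs_cast]; exact hj)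
  simpa [hc] using hjc

theorem intCast_mul_notMem_image_Ioo {n c : ℕ} (hc : c ≠ 0) {a b i : ℤ} (hi : i = a ∨ i = b)
    (hab : (b - a - 1) * c < n) :
    (i : ZMod n) * c ∉ (Ioo a b).image (fun j : ℤ => (j : ZMod n) * c) := by
  intro h
  obtain ⟨j, hj, hji⟩ := mem_image.1 h
  rw [mem_Ioo] at hj
  have hdiff : |j - i| ≤ b - a - 1 := abs_le.2 ⟨by omega, by omega⟩
  have := eq_zero_of_intCast_mul_eq_zero hc (j := j - i)
    (lt_of_le_of_lt (by gcongr) hab) (by push_cast; linear_combination hji)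
  omega

theorem closedNbhd_circulantGraph_circJumps_intCast_mul (n c k : ℕ) [NeZero n] (m : ℤ) :
    insert ((m : ZMod n) * c) ((circulantGraph (circJumps n c k)).neighborFinset ((m : ZMod n) * c))
      = (Icc (m - k) (m + k)).image (fun j : ℤ => (j : ZMod n) * c) := by
  rw [closedNbhd_circulantGraph_circJumps]
  ext y
  simp only [mem_image, mem_Icc]
  constructor
  · rintro ⟨j, hj, rfl⟩
    exact ⟨m + j, by omega, by push_cast; ring⟩
  · rintro ⟨j, hj, rfl⟩
    exact ⟨j - m, by omega, by push_cast; ring⟩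

theorem eq_of_dvd_of_two_mul_lt {n m : ℕ} (hdvd : n ∣ m) (hm : 0 < m) (hlt : m < 2 * n) :
    n = m := by
  obtain ⟨q, rfl⟩ := hdvd
  rcases q with _ | _ | q
  · simp at hm
  · simp
  · nlinarith

theorem stmt_14 (n c k : ℕ) [NeZero n] (hk : 1 ≤ k) (hc : 1 ≤ c)
    (hS : 2 * k * c ≤ n)
    (hmagic : IsClosedDistanceMagic (circulantGraph (circJumps n c k))) :
    n = 2 * k * c ∨ n = (2 * k + 1) * c := by
  rcases hS.eq_or_lt with h | hlt
  · exact .inl h.symm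
  refine .inr (eq_of_dvd_of_two_mul_lt ?_ (by positivity) (by nlinarith))
  obtain ⟨κ, hκ⟩ := hmagic
  have hc0 : c ≠ 0 := by omega
  have hwindow : ((k + 1 : ℤ) - -k - 1) * c < n := by linarith
  set s := (Ioo (-k : ℤ) (k + 1)).image (fun j : ℤ => (j : ZMod n) * c)
  have hnbhd (m a : ℤ) (hwin : Icc (m - k) (m + k) = insert a (Ioo (-k : ℤ) (k + 1))) :
      insert ((m : ZMod n) * c)
          ((circulantGraph (circJumps n c k)).neighborFinset ((m : ZMod n) * c))
        = insert ((a : ZMod n) * c) s := by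
    rw [closedNbhd_circulantGraph_circJumps_intCast_mul, hwin, image_insert]
  have key := hκ.eq_of_closedNbhd_eq_insert
    (intCast_mul_notMem_image_Ioo hc0 (.inl rfl) hwindow)
    (intCast_mul_notMem_image_Ioo hc0 (.inr rfl) hwindow)
    (hnbhd 0 (-k) (by ext; simp only [mem_Icc, mem_insert, mem_Ioo]; omega))
    (hnbhd 1 (k + 1) (by ext; simp only [mem_Icc, mem_insert, mem_Ioo]; omega))
  rw [← ZMod.natCast_eq_zero_iff]
  push_cast at key ⊢
  linear_combination -key
end

section
/- The circulant graph Ci(2kc, {c, 2c, ..., kc}) admits a closed distance magic labeling; explicitly, ℓ(v_i) = i+1 and ℓ(v_{ck+i}) = n−i for i ∈ {0,...,ck−1} gives all weights equal to k(n+1), where n = 2kc. -/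
open Finset SimpleGraph

/-!
The closed neighbourhood of `x` in `Ci(2kc, {c, …, kc})` is the set `x + {jc : j < 2k}`,
which is closed under the half turn `y ↦ y + kc`. The labeling pairs each vertex with its
half turn so that the two labels add up to `n + 1`; every closed neighbourhood is thus a union
of `k` such pairs and has weight `k (n + 1)`.
-/

namespace SimpleGraph

theorem mem_insert_neighborFinset_circulantGraph {G : Type*} [AddGroup G] [Fintype G]
    [DecidableEq G] (s : Set G) [DecidablePred (· ∈ s)] (x y : G) :
    y ∈ insert x ((circulantGraph s).neighborFinset x) ↔
      y - x = 0 ∨ y - x ∈ s ∨ -(y - x) ∈ s := by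
  rw [Finset.mem_insert, mem_neighborFinset, circulantGraph_adj, neg_sub, sub_eq_zero]
  by_cases hxy : y = x
  · simp [hxy]
  · simp only [hxy, false_or, Ne.symm hxy, not_false_eq_true, true_and, or_comm]

end SimpleGraph

section CirculantJumps

variable {n c k : ℕ}

theorem neg_natCast_mul_eq (hn : n = 2 * k * c) {i : ℕ} (hi : i ≤ 2 * k) :
    -((i * c : ℕ) : ZMod n) = (((2 * k - i) * c : ℕ) : ZMod n) := by
  refine (eq_neg_of_add_eq_zero_left ?_).symm
  rw [← Nat.cast_add, ← add_mul, Nat.sub_add_cancel hi, ← hn, ZMod.natCast_self]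

theorem eq_zero_or_mem_circJumps_or_neg_mem_iff (hk : 1 ≤ k) (hn : n = 2 * k * c)
    (z : ZMod n) :
    z = 0 ∨ z ∈ circJumps n c k ∨ -z ∈ circJumps n c k ↔
      ∃ j < 2 * k, ((j * c : ℕ) : ZMod n) = z := by
  simp only [circJumps, Finset.coe_image, Set.mem_image, Finset.mem_coe, Finset.mem_Icc]
  constructor
  · rintro (rfl | ⟨i, ⟨hi1, hik⟩, rfl⟩ | ⟨i, ⟨hi1, hik⟩, hi⟩)
    · exact ⟨0, by omega, by simp⟩
    · exact ⟨i, by omega, rfl⟩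
    · refine ⟨2 * k - i, by omega, ?_⟩
      rw [← neg_natCast_mul_eq hn (by omega), hi, neg_neg]
  · rintro ⟨j, hj, rfl⟩
    rcases Nat.eq_zero_or_pos j with rfl | hj0
    · simp
    by_cases hjk : j ≤ k
    · exact Or.inr (Or.inl ⟨j, ⟨hj0, hjk⟩, rfl⟩)
    · refine Or.inr (Or.inr ⟨2 * k - j, ⟨by omega, by omega⟩, ?_⟩)
      rw [neg_natCast_mul_eq hn hj.le]

theorem insert_neighborFinset_circulantGraph_circJumps [NeZero n] (hk : 1 ≤ k)
    (hn : n = 2 * k * c) (x : ZMod n) :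
    insert x ((circulantGraph (circJumps n c k)).neighborFinset x) =
      (Finset.range (2 * k)).image (fun j => x + ((j * c : ℕ) : ZMod n)) := by
  ext y
  rw [mem_insert_neighborFinset_circulantGraph, eq_zero_or_mem_circJumps_or_neg_mem_iff hk hn,
    Finset.mem_image]
  simp only [Finset.mem_range, eq_sub_iff_add_eq']

theorem mul_lt_of_lt_two_mul (hc : 1 ≤ c) (hn : n = 2 * k * c) {j : ℕ} (hj : j < 2 * k) :
    j * c < n :=
  hn ▸ Nat.mul_lt_mul_of_pos_right hj hc

theorem natCast_mul_injOn [NeZero n] (hc : 1 ≤ c) (hn : n = 2 * k * c) :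
    Set.InjOn (fun j : ℕ => ((j * c : ℕ) : ZMod n)) (Finset.range (2 * k)) := by
  intro i hi j hj hij
  simp only [Finset.coe_range, Set.mem_Iio] at hi hj
  have := congrArg ZMod.val hij
  simp only [ZMod.val_natCast_of_lt (mul_lt_of_lt_two_mul hc hn hi),
    ZMod.val_natCast_of_lt (mul_lt_of_lt_two_mul hc hn hj)] at this
  exact Nat.eq_of_mul_eq_mul_right hc this

end CirculantJumps

/-- The paper's labeling `ℓ(v_i) = i + 1`, `ℓ(v_{m+i}) = n - i` (`i < m`), for `n = 2m`. -/
def foldLabel (n m v : ℕ) : ℕ := if v < m then v + 1 else n - (v - m)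

section FoldLabel

variable {n m : ℕ}

theorem foldLabel_pos_and_le (hn : n = 2 * m) {v : ℕ} (hv : v < n) :
    1 ≤ foldLabel n m v ∧ foldLabel n m v ≤ n := by
  unfold foldLabel; split_ifs <;> omega

theorem foldLabel_injOn (hn : n = 2 * m) : Set.InjOn (foldLabel n m) (Set.Iio n) := by
  intro v hv w hw h
  simp only [Set.mem_Iio] at hv hw
  unfold foldLabel at h; split_ifs at h <;> omega

theorem foldLabel_add_foldLabel_add_half [NeZero n] (hn : n = 2 * m) (y : ZMod n) :
    foldLabel n m y.val + foldLabel n m (y + (m : ZMod n)).val = n + 1 := by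
  have hy := y.val_lt
  have hm : (m : ZMod n).val = m := ZMod.val_natCast_of_lt (by omega)
  by_cases hlt : y.val + m < n
  · rw [ZMod.val_add_of_lt (by rwa [hm]), hm]
    unfold foldLabel; split_ifs <;> omega
  · rw [ZMod.val_add_of_le (by omega), hm]
    unfold foldLabel; split_ifs <;> omega

noncomputable def foldLabelEquiv [NeZero n] (hn : n = 2 * m) :
    ZMod n ≃ Fin (Fintype.card (ZMod n)) :=
  Equiv.ofBijective
    (fun y => ⟨foldLabel n m y.val - 1, by
      have := foldLabel_pos_and_le hn y.val_lt
      rw [ZMod.card]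
      omega⟩)
    ((Fintype.bijective_iff_injective_and_card _).2 ⟨fun y z h => by
      have hy := foldLabel_pos_and_le hn y.val_lt
      have hz := foldLabel_pos_and_le hn z.val_lt
      simp only [Fin.mk.injEq] at h
      exact ZMod.val_injective n (foldLabel_injOn hn y.val_lt z.val_lt (by omega)),
      (Fintype.card_fin _).symm⟩)

theorem foldLabelEquiv_apply_add_one [NeZero n] (hn : n = 2 * m) (y : ZMod n) :
    (foldLabelEquiv hn y : ℕ) + 1 = foldLabel n m y.val := by
  have := foldLabel_pos_and_le hn y.val_lt
  simp only [foldLabelEquiv, Equiv.ofBijective_apply]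
  omega

end FoldLabel

theorem sum_foldLabel_insert_neighborFinset {n c k : ℕ} [NeZero n] (hk : 1 ≤ k) (hc : 1 ≤ c)
    (hn : n = 2 * k * c) (x : ZMod n) :
    ∑ y ∈ insert x ((circulantGraph (circJumps n c k)).neighborFinset x),
      foldLabel n (c * k) y.val = k * (n + 1) := by
  rw [insert_neighborFinset_circulantGraph_circJumps hk hn,
    Finset.sum_image fun i hi j hj h => natCast_mul_injOn hc hn hi hj (add_left_cancel h),
    two_mul, Finset.sum_range_add, ← Finset.sum_add_distrib]
  have hpair : ∀ j ∈ Finset.range k, foldLabel n (c * k) (x + ((j * c : ℕ) : ZMod n)).val +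
      foldLabel n (c * k) (x + (((k + j) * c : ℕ) : ZMod n)).val = n + 1 := by
    intro j _
    have hhalf : x + (((k + j) * c : ℕ) : ZMod n) =
        x + ((j * c : ℕ) : ZMod n) + ((c * k : ℕ) : ZMod n) := by
      push_cast
      ring
    rw [hhalf]
    exact foldLabel_add_foldLabel_add_half (by rw [hn]; ring) _
  rw [Finset.sum_congr rfl hpair, Finset.sum_const, Finset.card_range, smul_eq_mul]

theorem stmt_15 (n c k : ℕ) [NeZero n] (hk : 1 ≤ k) (hc : 1 ≤ c)
    (hn : n = 2 * k * c) :
    IsClosedDistanceMagic (circulantGraph (circJumps n c k)) ∧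
      (∀ x : ZMod n,
        ∑ y ∈ insert x ((circulantGraph (circJumps n c k)).neighborFinset x),
          (if (y.val : ℕ) < c * k then y.val + 1 else n - (y.val - c * k)) =
            k * (n + 1)) := by
  have hn' : n = 2 * (c * k) := by rw [hn]; ring
  refine ⟨⟨k * (n + 1), by positivity, foldLabelEquiv hn', fun x => ?_⟩,
    sum_foldLabel_insert_neighborFinset hk hc hn⟩
  simp only [foldLabelEquiv_apply_add_one]
  exact sum_foldLabel_insert_neighborFinset hk hc hn x
end

section
/- Let G = Ci((2k+1)c, {c, 2c, ..., kc}) with c ≥ 1. Then G admits a closed distance magic labeling if and only if c is odd. -/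
/-!
The jumps `c, 2c, …, kc` together with their negatives and `0` are exactly the multiples of `c`
in `ZMod ((2k+1)c)`, so two vertices are adjacent iff they are distinct and congruent mod `c`:
the graph is `c` disjoint copies of `K_{2k+1}`, and its closed neighbourhoods are the residue
classes mod `c`. A closed distance magic labeling with constant `K` thus splits `1, …, n` into
`c` classes of sum `K`, so `2cK = n(n+1)`, i.e. `2K = (2k+1)(n+1)`, which forces `n`, hence `c`,
to be odd. Conversely, for odd `c` take a Kotzig array `σ` of size `(2k+1) × c` (rows are
permutations of `Fin c`, column sums are constant): a three-row array for odd `c` followed by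
`k - 1` pairs `r, c - 1 - r`. Labelling the vertex `qc + r` by `qc + σ q r + 1` makes every
residue class sum to the same value.
-/

open Finset SimpleGraph

theorem sum_val_add_one_mul_two {V : Type*} [Fintype V] {N : ℕ} (ℓ : V ≃ Fin N) :
    (∑ y, ((ℓ y : ℕ) + 1)) * 2 = N * (N + 1) := by
  have h := Finset.sum_range_id_mul_two (N + 1)
  rw [Finset.sum_range_succ', Nat.add_zero, Nat.add_sub_cancel] at h
  rw [ℓ.sum_comp (fun i => (i : ℕ) + 1), Fin.sum_univ_eq_sum_range (· + 1), h, Nat.mul_comm]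

section SameFibre

variable {V ι : Type*} [Fintype V] [DecidableEq V] [DecidableEq ι] {G : SimpleGraph V}
  [DecidableRel G.Adj] {p : V → ι}

theorem insert_neighborFinset_eq_filter (hG : ∀ x y, G.Adj x y ↔ x ≠ y ∧ p x = p y) (x : V) :
    insert x (G.neighborFinset x) = univ.filter (fun y => p y = p x) := by
  ext y
  by_cases hxy : x = y
  · simp [hxy]
  · simp [hG, hxy, Ne.symm hxy, eq_comm]

theorem IsClosedDistanceMagicWith.card_mul_mul_two [Fintype ι] {K : ℕ}
    (h : IsClosedDistanceMagicWith G K) (hG : ∀ x y, G.Adj x y ↔ x ≠ y ∧ p x = p y)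
    (hp : Function.Surjective p) :
    Fintype.card ι * K * 2 = Fintype.card V * (Fintype.card V + 1) := by
  obtain ⟨-, ℓ, hℓ⟩ := h
  have hfibre : ∀ i, ∑ y ∈ univ.filter (fun y => p y = i), ((ℓ y : ℕ) + 1) = K := by
    intro i
    obtain ⟨x, rfl⟩ := hp i
    rw [← insert_neighborFinset_eq_filter hG]
    exact hℓ x
  rw [← sum_val_add_one_mul_two ℓ, ← Finset.sum_fiberwise univ p,
    Finset.sum_congr rfl (fun i _ => hfibre i), Finset.sum_const, Finset.card_univ, smul_eq_mul]

end SameFibre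

def IsKotzigArray {m c : ℕ} (σ : Fin m → Fin c → Fin c) : Prop :=
  (∀ q, Function.Injective (σ q)) ∧ ∃ S, ∀ r, ∑ q, (σ q r : ℕ) = S

namespace IsKotzigArray

variable {m₁ m₂ c : ℕ} {σ₁ : Fin m₁ → Fin c → Fin c} {σ₂ : Fin m₂ → Fin c → Fin c}

theorem append (h₁ : IsKotzigArray σ₁) (h₂ : IsKotzigArray σ₂) :
    IsKotzigArray (Fin.append σ₁ σ₂) := by
  obtain ⟨hinj₁, S₁, hS₁⟩ := h₁
  obtain ⟨hinj₂, S₂, hS₂⟩ := h₂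
  refine ⟨Fin.addCases (by simpa using hinj₁) (by simpa using hinj₂), S₁ + S₂, fun r => ?_⟩
  simp [Fin.sum_univ_add, hS₁, hS₂]

end IsKotzigArray

theorem isKotzigArray_id_rev (c : ℕ) : IsKotzigArray ![id, @Fin.rev c] := by
  refine ⟨fun q => ?_, c - 1, fun r => ?_⟩
  · fin_cases q
    exacts [Function.injective_id, Fin.rev_injective]
  · simp [Fin.sum_univ_two, Fin.val_rev]
    omega

def shiftRow (t : ℕ) (r : Fin (2 * t + 1)) : Fin (2 * t + 1) :=
  ⟨if r ≤ t then r + t else r - (t + 1), by split_ifs <;> omega⟩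

-- `balanceRow t r = 3t - r - shiftRow t r`; it takes the even values on `r ≤ t` and the odd
-- ones on `r > t`, which is why it is a permutation.
def balanceRow (t : ℕ) (r : Fin (2 * t + 1)) : Fin (2 * t + 1) :=
  ⟨if r ≤ t then 2 * (t - r) else 4 * t + 1 - 2 * r, by split_ifs <;> omega⟩

theorem shiftRow_injective (t : ℕ) : Function.Injective (shiftRow t) := by
  intro r s h
  simp only [shiftRow, Fin.mk.injEq] at h
  split_ifs at h <;> omega

theorem balanceRow_injective (t : ℕ) : Function.Injective (balanceRow t) := by
  intro r s h
  simp only [balanceRow, Fin.mk.injEq] at h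
  split_ifs at h <;> omega

theorem isKotzigArray_id_shiftRow_balanceRow (t : ℕ) :
    IsKotzigArray ![id, shiftRow t, balanceRow t] := by
  refine ⟨fun q => ?_, 3 * t, fun r => ?_⟩
  · fin_cases q
    exacts [Function.injective_id, shiftRow_injective t, balanceRow_injective t]
  · simp only [Fin.sum_univ_three, Matrix.cons_val, id, shiftRow, balanceRow]
    split_ifs <;> omega

theorem exists_isKotzigArray {m c : ℕ} (hc : Odd c) (hm : Odd m) (h3 : 3 ≤ m) :
    ∃ σ : Fin m → Fin c → Fin c, IsKotzigArray σ := by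
  obtain ⟨t, rfl⟩ := hc
  obtain ⟨j, rfl⟩ : ∃ j, m = 3 + 2 * j := by
    obtain ⟨a, rfl⟩ := hm
    exact ⟨a - 1, by omega⟩
  clear hm h3
  induction j with
  | zero => exact ⟨_, isKotzigArray_id_shiftRow_balanceRow t⟩
  | succ j ih =>
    obtain ⟨σ, hσ⟩ := ih
    rw [show 3 + 2 * (j + 1) = 3 + 2 * j + 2 by ring]
    exact ⟨_, hσ.append (isKotzigArray_id_rev _)⟩

theorem Equiv.sum_filter_snd_eq {V α β M : Type*} [Fintype V] [Fintype α] [Fintype β]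
    [DecidableEq β] [AddCommMonoid M] (e : V ≃ α × β) (f : α × β → M) (b : β) :
    ∑ y ∈ univ.filter (fun y => (e y).2 = b), f (e y) = ∑ a, f (a, b) := by
  rw [Finset.sum_filter, e.sum_comp (fun z => if z.2 = b then f z else 0),
    Fintype.sum_prod_type]
  simp

theorem IsKotzigArray.isClosedDistanceMagic {V : Type*} [Fintype V] [DecidableEq V]
    {G : SimpleGraph V} [DecidableRel G.Adj] {m c : ℕ} (e : V ≃ Fin m × Fin c)
    (hG : ∀ x y, G.Adj x y ↔ x ≠ y ∧ (e x).2 = (e y).2) {σ : Fin m → Fin c → Fin c}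
    (hσ : IsKotzigArray σ) (hm : 0 < m) : IsClosedDistanceMagic G := by
  obtain ⟨hinj, S, hS⟩ := hσ
  have hcard : m * c = Fintype.card V := by simp [Fintype.card_congr e]
  let rows : Fin m → Equiv.Perm (Fin c) := fun q =>
    Equiv.ofBijective (σ q) (hinj q).bijective_of_finite
  let ℓ : V ≃ Fin (Fintype.card V) :=
    e.trans ((Equiv.prodShear (Equiv.refl _) rows).trans (finProdFinEquiv.trans (finCongr hcard)))
  have hℓ : ∀ y, (ℓ y : ℕ) = σ (e y).1 (e y).2 + c * (e y).1 := fun y => rfl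
  refine ⟨S + c * ∑ q : Fin m, (q : ℕ) + m, by omega, ℓ, fun x => ?_⟩
  rw [insert_neighborFinset_eq_filter (p := fun y => (e y).2) hG]
  simp only [hℓ]
  rw [e.sum_filter_snd_eq (fun z => (σ z.1 z.2 : ℕ) + c * z.1 + 1)]
  simp [Finset.sum_add_distrib, Finset.mul_sum, hS]

def ZMod.valEquiv (n : ℕ) [NeZero n] : ZMod n ≃ Fin n where
  toFun z := ⟨z.val, z.val_lt⟩
  invFun i := (i : ℕ)
  left_inv := ZMod.natCast_zmod_val
  right_inv i := Fin.ext (ZMod.val_cast_of_lt i.2)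

def ZMod.equivFinProd {n m c : ℕ} [NeZero n] (h : n = m * c) : ZMod n ≃ Fin m × Fin c :=
  (ZMod.valEquiv n).trans ((finCongr h).trans finProdFinEquiv.symm)

theorem ZMod.val_equivFinProd_snd {n m c : ℕ} [NeZero n] (h : n = m * c) (x : ZMod n) :
    ((ZMod.equivFinProd h x).2 : ℕ) = x.val % c := rfl

theorem exists_mul_eq_or_sub_eq_mul_iff_dvd {n c k v : ℕ} (hn : n = (2 * k + 1) * c)
    (hv₀ : 0 < v) (hvn : v < n) :
    ((∃ i, 1 ≤ i ∧ i ≤ k ∧ v = i * c) ∨ ∃ i, 1 ≤ i ∧ i ≤ k ∧ n - v = i * c) ↔ c ∣ v := by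
  subst hn
  constructor
  · rintro (⟨i, -, -, rfl⟩ | ⟨i, -, -, hi⟩)
    · exact Dvd.intro_left i rfl
    · have : v = (2 * k + 1 - i) * c := by rw [Nat.sub_mul, ← hi]; omega
      exact this ▸ Dvd.intro_left _ rfl
  · rintro ⟨j, rfl⟩
    have hj : j < 2 * k + 1 := by nlinarith
    rcases le_or_gt j k with hjk | hjk
    · exact .inl ⟨j, by nlinarith, hjk, Nat.mul_comm c j⟩
    · refine .inr ⟨2 * k + 1 - j, by omega, by omega, ?_⟩
      rw [Nat.sub_mul, Nat.mul_comm c j]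

section Circulant

variable {n c k : ℕ} [NeZero n]

theorem mem_circJumps_iff (hn : n = (2 * k + 1) * c) (d : ZMod n) :
    d ∈ circJumps n c k ↔ ∃ i, 1 ≤ i ∧ i ≤ k ∧ d.val = i * c := by
  simp only [circJumps, Finset.coe_image, Set.mem_image, Finset.mem_coe, Finset.mem_Icc]
  constructor
  · rintro ⟨i, ⟨hi₁, hik⟩, rfl⟩
    have hlt : i * c < n := by rw [hn]; nlinarith [NeZero.pos n]
    exact ⟨i, hi₁, hik, ZMod.val_cast_of_lt hlt⟩
  · rintro ⟨i, hi₁, hik, hd⟩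
    exact ⟨i, ⟨hi₁, hik⟩, by rw [← hd, ZMod.natCast_zmod_val]⟩

theorem mem_circJumps_or_neg_mem_iff (hn : n = (2 * k + 1) * c) {d : ZMod n} (hd : d ≠ 0) :
    d ∈ circJumps n c k ∨ -d ∈ circJumps n c k ↔ c ∣ d.val := by
  have : NeZero d := ⟨hd⟩
  have hv₀ : 0 < d.val := Nat.pos_of_ne_zero ((ZMod.val_ne_zero d).mpr hd)
  have hvn : d.val < n := d.val_lt
  rw [mem_circJumps_iff hn, mem_circJumps_iff hn, ZMod.val_neg_of_ne_zero,
    exists_mul_eq_or_sub_eq_mul_iff_dvd hn hv₀ hvn]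

theorem dvd_val_sub_iff (hcn : c ∣ n) (x y : ZMod n) :
    c ∣ (x - y).val ↔ x.val % c = y.val % c := by
  rw [← ZMod.natCast_eq_zero_iff, ← ZMod.cast_eq_val, ZMod.cast_sub hcn, sub_eq_zero,
    ZMod.cast_eq_val, ZMod.cast_eq_val, ZMod.natCast_eq_natCast_iff']

theorem circulantGraph_circJumps_adj_iff (hn : n = (2 * k + 1) * c) (x y : ZMod n) :
    (circulantGraph (circJumps n c k)).Adj x y ↔ x ≠ y ∧ x.val % c = y.val % c := by
  rw [circulantGraph_adj]
  refine and_congr_right fun hxy => ?_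
  rw [← neg_sub x y, mem_circJumps_or_neg_mem_iff hn (sub_ne_zero.mpr hxy),
    dvd_val_sub_iff (hn ▸ Dvd.intro_left _ rfl)]

end Circulant

theorem odd_of_mul_mul_two_eq {n c k K : ℕ} (hc : 0 < c) (hn : n = (2 * k + 1) * c)
    (h : c * K * 2 = n * (n + 1)) : Odd c := by
  have hK : K * 2 = (2 * k + 1) * (n + 1) := by
    apply Nat.eq_of_mul_eq_mul_left hc
    rw [← Nat.mul_assoc, h, hn]
    ring
  have heven : Even ((2 * k + 1) * (n + 1)) := ⟨K, by rw [← hK]; ring⟩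
  simpa only [hn, Nat.even_mul, Nat.even_add_one, even_two, true_or, not_true, false_or,
    not_or, Nat.not_even_iff_odd, true_and] using heven

theorem stmt_16 (n c k : ℕ) [NeZero n] (hk : 1 ≤ k) (hc : 1 ≤ c)
    (hn : n = (2 * k + 1) * c) :
    IsClosedDistanceMagic (circulantGraph (circJumps n c k)) ↔ Odd c := by
  let e := ZMod.equivFinProd hn
  have hG : ∀ x y, (circulantGraph (circJumps n c k)).Adj x y ↔ x ≠ y ∧ (e x).2 = (e y).2 := by
    intro x y
    rw [circulantGraph_circJumps_adj_iff hn, Fin.ext_iff, ZMod.val_equivFinProd_snd,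
      ZMod.val_equivFinProd_snd]
  constructor
  · rintro ⟨K, hK⟩
    have h := hK.card_mul_mul_two hG (Prod.snd_surjective.comp e.surjective)
    rw [Fintype.card_fin, ZMod.card] at h
    exact odd_of_mul_mul_two_eq hc hn h
  · intro hodd
    obtain ⟨σ, hσ⟩ := exists_isKotzigArray hodd (odd_two_mul_add_one k) (by omega)
    exact hσ.isClosedDistanceMagic e hG (by omega)
end

section
/- For every integer k ≥ 2, the equation ∑_{s=1}^{k−1} cos(sx) + cos((k+1)x) = −1/2 has exactly 2k+2 solutions in [−π, π], namely x = ±2jπ/(2k+1) for j ∈ {1,...,k}, together with x = ±π/3. -/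
open Finset Real

/-!
Multiplying by `2 sin (x / 2)` telescopes the cosine sum, and the equation becomes
`sin ((2k+1) x / 2) · (2 cos x - 1) = 0` away from the zero `x = 0` of `sin (x / 2)`.
In `[-π, π]` the first factor vanishes exactly at `x = 2jπ / (2k+1)` with `|j| ≤ k`,
and the second exactly at `x = ±π/3`.
-/

theorem two_mul_sin_half_mul_sum_cos (n : ℕ) (x : ℝ) :
    2 * sin (x / 2) * ∑ s ∈ Icc 1 n, cos (s * x) = sin ((2 * n + 1) * (x / 2)) - sin (x / 2) := by
  rw [← Ico_add_one_right_eq_Icc, sum_Ico_eq_sum_range, Nat.add_sub_cancel, mul_assoc]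
  push_cast
  simp_rw [show ∀ i : ℕ, (1 + (i : ℝ)) * x = x * i + x from fun i => by ring]
  rw [sin_mul_sum_cos, ← mul_assoc, two_mul_sin_mul_cos,
    show n * x / 2 - ((n - 1) * x / 2 + x) = -(x / 2) by ring,
    show n * x / 2 + ((n - 1) * x / 2 + x) = (2 * n + 1) * (x / 2) by ring, sin_neg]
  ring

theorem two_mul_sin_half_mul_sum_cos_add_cos_succ_add_half {k : ℕ} (hk : 1 ≤ k) (x : ℝ) :
    2 * sin (x / 2) * (∑ s ∈ Icc 1 (k - 1), cos (s * x) + cos ((k + 1) * x) + 1 / 2) =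
      sin ((2 * k + 1) * (x / 2)) * (2 * cos x - 1) := by
  have hsum := two_mul_sin_half_mul_sum_cos (k - 1) x
  rw [Nat.cast_sub hk, Nat.cast_one] at hsum
  rw [mul_add, mul_add, hsum]
  obtain ⟨θ, rfl⟩ : ∃ θ, x = 2 * θ := ⟨x / 2, by ring⟩
  set u := (2 * (k : ℝ) + 1) * (2 * θ / 2)
  rw [show (2 * ((k : ℝ) - 1) + 1) * (2 * θ / 2) = u - 2 * θ by ring,
    show ((k : ℝ) + 1) * (2 * θ) = u + θ by ring, show 2 * θ / 2 = θ by ring,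
    sin_sub, cos_add, cos_two_mul, sin_two_mul]
  linear_combination (-2 * sin u) * sin_sq_add_cos_sq θ

theorem sum_cos_add_cos_succ_eq_neg_half_iff {k : ℕ} (hk : 1 ≤ k) {x : ℝ}
    (hx : x ∈ Set.Icc (-π) π) :
    ∑ s ∈ Icc 1 (k - 1), cos (s * x) + cos ((k + 1) * x) = -1 / 2 ↔
      (x ≠ 0 ∧ sin ((2 * k + 1) * (x / 2)) = 0) ∨ cos x = 1 / 2 := by
  by_cases hx0 : x = 0
  · subst hx0
    simp only [mul_zero, cos_zero, sum_const, nsmul_eq_mul, mul_one]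
    norm_num
    linarith [(k - 1).cast_nonneg (α := ℝ)]
  have hsin : 2 * sin (x / 2) ≠ 0 := by
    refine mul_ne_zero two_ne_zero ?_
    rw [Ne, sin_eq_zero_iff_of_lt_of_lt (by linarith [hx.1, pi_pos]) (by linarith [hx.2, pi_pos])]
    exact fun h => hx0 (by linarith)
  have h_iff : ∀ a : ℝ, a = -1 / 2 ↔ 2 * sin (x / 2) * (a + 1 / 2) = 0 := fun a => by
    rw [mul_eq_zero, or_iff_right hsin]
    constructor <;> intro h <;> linarith
  rw [h_iff, two_mul_sin_half_mul_sum_cos_add_cos_succ_add_half hk, mul_eq_zero, sub_eq_zero,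
    show 2 * cos x = 1 ↔ cos x = 1 / 2 by constructor <;> intro h <;> linarith]
  simp only [ne_eq, hx0, not_false_eq_true, true_and]

theorem sin_odd_mul_half_eq_zero_iff_of_nonneg (n : ℕ) {t : ℝ} (ht : 0 ≤ t) :
    sin ((2 * n + 1) * (t / 2)) = 0 ↔ ∃ j : ℕ, t = 2 * j * π / (2 * n + 1) := by
  rw [sin_eq_zero_iff]
  constructor
  · rintro ⟨m, hm⟩
    lift m to ℕ using by
      have : (0 : ℝ) ≤ m * π := by rw [hm]; positivity
      exact_mod_cast nonneg_of_mul_nonneg_left this pi_pos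
    exact ⟨m, by field_simp; push_cast at hm; linarith⟩
  · rintro ⟨j, rfl⟩
    exact ⟨j, by push_cast; field_simp⟩

theorem two_mul_nat_mul_pi_div_le_pi_iff (j n : ℕ) :
    2 * j * π / (2 * n + 1) ≤ π ↔ j ≤ n := by
  rw [div_le_iff₀ (by positivity), mul_comm π, mul_le_mul_iff_left₀ pi_pos]
  norm_cast
  omega

theorem mem_Icc_and_ne_zero_and_sin_eq_zero_iff (n : ℕ) (x : ℝ) :
    (x ∈ Set.Icc (-π) π ∧ x ≠ 0 ∧ sin ((2 * n + 1) * (x / 2)) = 0) ↔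
      ∃ j : ℕ, 1 ≤ j ∧ j ≤ n ∧
        (x = 2 * j * π / (2 * n + 1) ∨ x = -(2 * j * π / (2 * n + 1))) := by
  have hsin_abs : sin ((2 * n + 1) * (|x| / 2)) = 0 ↔ sin ((2 * n + 1) * (x / 2)) = 0 := by
    rcases abs_choice x with h | h <;> simp [h, neg_div, sin_neg]
  have hy : ∀ j : ℕ, (0 : ℝ) ≤ 2 * j * π / (2 * n + 1) := fun j => by positivity
  simp_rw [← abs_eq (hy _)]
  rw [Set.mem_Icc, ← abs_le, ← abs_pos, ← hsin_abs,
    sin_odd_mul_half_eq_zero_iff_of_nonneg n (abs_nonneg x)]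
  generalize |x| = t
  constructor
  · rintro ⟨hle, hpos, j, rfl⟩
    refine ⟨j, Nat.one_le_iff_ne_zero.2 ?_, (two_mul_nat_mul_pi_div_le_pi_iff j n).1 hle, rfl⟩
    rintro rfl
    simp at hpos
  · rintro ⟨j, hj, hjn, rfl⟩
    have : (0 : ℝ) < j := by exact_mod_cast hj
    exact ⟨(two_mul_nat_mul_pi_div_le_pi_iff j n).2 hjn, by positivity, j, rfl⟩

theorem mem_Icc_and_cos_eq_half_iff (x : ℝ) :
    (x ∈ Set.Icc (-π) π ∧ cos x = 1 / 2) ↔ x = π / 3 ∨ x = -(π / 3) := by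
  rw [← abs_eq (by positivity), Set.mem_Icc, ← abs_le, ← cos_abs, ← cos_pi_div_three]
  constructor
  · rintro ⟨hx, h⟩
    exact injOn_cos ⟨abs_nonneg x, hx⟩ ⟨by positivity, by linarith [pi_pos]⟩ h
  · intro h
    rw [h]
    exact ⟨by linarith [pi_pos], rfl⟩

theorem stmt_18 (k : ℕ) (hk : 2 ≤ k) :
    {x : ℝ | x ∈ Set.Icc (-π) π ∧
        ∑ s ∈ Finset.Icc 1 (k - 1), Real.cos (s * x) + Real.cos ((k + 1) * x) = -1/2} =
      {x : ℝ | ∃ j : ℕ, 1 ≤ j ∧ j ≤ k ∧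
          (x = 2 * j * π / (2 * k + 1) ∨ x = -(2 * j * π / (2 * k + 1)))} ∪
        {π / 3, -(π / 3)} := by
  ext x
  simp only [Set.mem_ofPred_eq, Set.mem_union, Set.mem_insert_iff, Set.mem_singleton_iff]
  rw [← mem_Icc_and_ne_zero_and_sin_eq_zero_iff, ← mem_Icc_and_cos_eq_half_iff,
    and_congr_right (fun hx => sum_cos_add_cos_succ_eq_neg_half_iff (by omega) hx)]
  tauto
end
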